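/- arXiv:1806.08865 — 2 statements merged into one kernel-verified Lean document; each statement's English description precedes it below -/
import Mathlib

section
/- Width after a centroid cut: Let K ⊂ ℝ^d be a compact convex body with nonempty interior and centroid μ, and let H = {x ∈ ℝ^d : ⟨v, x−μ⟩ ≤ 0} be any half-space whose boundary hyperplane passes through μ. Then the minimum directional width satisfies δ(H ∩ K) ≥ δ(K)/(2d). -/
/-!
For a linear functional `f`, the centroid `c` of a convex body `K ⊆ ℝⁿ` lies at most `n/(n+1)`
of the way from `min_K f` to `max_K f`: the homothety of ratio `r` about a minimiser of `f` maps
`K` into `{f ≤ min_K f + r (max_K f - min_K f)}`, so by the layer-cake formula the mean of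
`f - min_K f` over `K` is at most `∫₀¹ (1 - rⁿ) dr = n/(n+1)` times the range of `f`.
By Hahn–Banach, this says that `K` contains `c` and `c + (c - x)/n` for every `x ∈ K`.
So every `x ∈ K` either lies in the half-space `H` through `c` or is matched by the point
`c + (c - x)/n ∈ H ∩ K`, which is `1/n` as far from `c` in every direction; splitting a width
`⟪u, x - y⟫` at `c` then gives `w(K, u) ≤ 2n · w(H ∩ K, u)`.
-/

open MeasureTheory
open scoped RealInnerProductSpace

/-- The directional width of `K` in direction `v`: `w(K, v) = sup_{x,y ∈ K} ⟪v, x - y⟫`. -/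
noncomputable def dirWidth {d : ℕ} (K : Set (EuclideanSpace ℝ (Fin d)))
    (v : EuclideanSpace ℝ (Fin d)) : ℝ :=
  sSup {r : ℝ | ∃ x ∈ K, ∃ y ∈ K, r = ⟪v, x - y⟫}

/-- The minimum directional width `δ(K)` over all unit directions. -/
noncomputable def minWidth {d : ℕ} (K : Set (EuclideanSpace ℝ (Fin d))) : ℝ :=
  sInf {r : ℝ | ∃ v : EuclideanSpace ℝ (Fin d), ‖v‖ = 1 ∧ r = dirWidth K v}

open Set Module Bornology

theorem intervalIntegral.integral_one_sub_div_pow (n : ℕ) {M : ℝ} (hM : 0 ≤ M) :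
    ∫ t in (0)..M, (1 - (t / M) ^ n) = n / (n + 1) * M := by
  rcases hM.eq_or_lt with rfl | hM
  · simp
  rw [integral_sub intervalIntegrable_const (Continuous.intervalIntegrable (by fun_prop) _ _),
    integral_comp_div (· ^ n) hM.ne', integral_pow, div_self hM.ne']
  simp only [integral_const, sub_zero, smul_eq_mul, mul_one, one_pow, zero_div, ne_eq,
    Nat.add_eq_zero_iff, one_ne_zero, and_false, not_false_eq_true, zero_pow, one_div]
  field_simp
  ring

section Centroid

variable {E : Type*} [NormedAddCommGroup E] [NormedSpace ℝ E]
  {K : Set E} {f : StrongDual ℝ E} {a : E} {M : ℝ}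

lemma Convex.mem_of_forall_dual_le (hK : Convex ℝ K) (hKc : IsClosed K) {p : E}
    (h : ∀ (f : StrongDual ℝ E) (B : ℝ), (∀ y ∈ K, f y ≤ B) → f p ≤ B) : p ∈ K := by
  by_contra hp
  obtain ⟨f, u, hfK, hfp⟩ := geometric_hahn_banach_closed_point hK hKc hp
  exact (h f u fun y hy => (hfK y hy).le).not_gt hfp

lemma Convex.homothety_image_subset_inter_le (hK : Convex ℝ K) (ha : a ∈ K)
    (hM : ∀ y ∈ K, f y ≤ f a + M) {r : ℝ} (hr0 : 0 ≤ r) (hr1 : r ≤ 1) :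
    AffineMap.homothety a r '' K ⊆ K ∩ {x | f x ≤ f a + r * M} := by
  rintro _ ⟨y, hy, rfl⟩
  rw [AffineMap.homothety_eq_lineMap]
  refine ⟨hK.lineMap_mem ha hy ⟨hr0, hr1⟩, ?_⟩
  have hfy := hM y hy
  simp only [mem_ofPred_eq, AffineMap.lineMap_apply_module', map_add, map_smul, map_sub,
    smul_eq_mul]
  nlinarith

variable [MeasurableSpace E] (μ : Measure E)

noncomputable def centroid (K : Set E) : E :=
  (μ.real K)⁻¹ • ∫ x in K, x ∂μ

variable [FiniteDimensional ℝ E] [BorelSpace E] [μ.IsAddHaarMeasure]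

lemma measureReal_inter_lt_le_one_sub_pow (hKc : IsCompact K) (hK : Convex ℝ K) (ha : a ∈ K)
    (hM : ∀ y ∈ K, f y ≤ f a + M) {r : ℝ} (hr0 : 0 ≤ r) (hr1 : r ≤ 1) :
    μ.real (K ∩ {x | f a + r * M < f x}) ≤ (1 - r ^ finrank ℝ E) * μ.real K := by
  have hsplit : μ.real (K ∩ {x | f a + r * M < f x}) + μ.real (K ∩ {x | f x ≤ f a + r * M})
      = μ.real K := by
    rw [← measureReal_inter_add_sdiff (measurableSet_lt measurable_const f.measurable)
      hKc.measure_lt_top.ne]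
    congr 2
    ext x
    simp [not_lt]
  have himage : r ^ finrank ℝ E * μ.real K ≤ μ.real (K ∩ {x | f x ≤ f a + r * M}) :=
    calc r ^ finrank ℝ E * μ.real K = μ.real (AffineMap.homothety a r '' K) := by
          simp [measureReal_def, Measure.addHaar_image_homothety, abs_of_nonneg, hr0]
      _ ≤ _ := measureReal_mono (hK.homothety_image_subset_inter_le ha hM hr0 hr1)
          (measure_ne_top_of_subset inter_subset_left hKc.measure_lt_top.ne)
  linarith

lemma setIntegral_sub_min_le (hKc : IsCompact K) (hK : Convex ℝ K) (ha : a ∈ K)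
    (hmin : ∀ y ∈ K, f a ≤ f y) (hM : ∀ y ∈ K, f y ≤ f a + M) :
    ∫ x in K, (f x - f a) ∂μ ≤ finrank ℝ E / (finrank ℝ E + 1) * M * μ.real K := by
  set n := finrank ℝ E
  have hM0 : 0 ≤ M := by linarith [hM a ha]
  set bound : ℝ → ℝ := (Ioc 0 M).indicator fun t => (1 - (t / M) ^ n) * μ.real K
    with hbound_def
  have hint : IntegrableOn (fun x => f x - f a) K μ :=
    (by fun_prop : Continuous fun x => f x - f a).continuousOn.integrableOn_compact hKc
  have hnonneg : 0 ≤ᵐ[μ.restrict K] fun x => f x - f a :=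
    (ae_restrict_iff' hKc.measurableSet).2 (ae_of_all _ fun y hy => sub_nonneg.2 (hmin y hy))
  have htail : ∀ t ∈ Ioi (0 : ℝ), (μ.restrict K).real {x | t < f x - f a} ≤ bound t := by
    intro t ht
    rw [measureReal_restrict_apply (measurableSet_lt measurable_const (by fun_prop)),
      inter_comm]
    by_cases htM : t ≤ M
    · rw [hbound_def, indicator_of_mem (show t ∈ Ioc 0 M from ⟨ht, htM⟩)]
      have hMpos : 0 < M := lt_of_lt_of_le ht htM
      convert measureReal_inter_lt_le_one_sub_pow μ hKc hK ha hM (div_nonneg ht.le hM0)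
        (div_le_one_of_le₀ htM hM0) using 4
      ext x
      simp [div_mul_cancel₀ t hMpos.ne', lt_sub_iff_add_lt']
    · have hempty : K ∩ {x | t < f x - f a} = ∅ :=
        eq_empty_iff_forall_notMem.2 fun x ⟨hx, hlt⟩ => htM (by linarith [hM x hx, hlt.out])
      rw [hbound_def, indicator_of_notMem fun h => htM h.2, hempty, measureReal_empty]
  have hbound : Integrable bound ((volume : Measure ℝ).restrict (Ioi 0)) :=
    ((Continuous.integrableOn_Ioc (by fun_prop)).integrable_indicator measurableSet_Ioc).restrict
  calc ∫ x in K, (f x - f a) ∂μ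
      = ∫ t in Ioi 0, (μ.restrict K).real {x | t < f x - f a} :=
        hint.integral_eq_integral_meas_lt hnonneg
    _ ≤ ∫ t in Ioi 0, bound t :=
        integral_mono_of_nonneg (ae_of_all _ fun _ => measureReal_nonneg) hbound
          ((ae_restrict_iff' measurableSet_Ioi).2 (ae_of_all _ htail))
    _ = n / (n + 1) * M * μ.real K := by
        rw [setIntegral_indicator measurableSet_Ioc, inter_eq_right.2 Ioc_subset_Ioi_self,
          ← intervalIntegral.integral_of_le hM0, intervalIntegral.integral_mul_const,
          intervalIntegral.integral_one_sub_div_pow n hM0]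

lemma finrank_add_one_mul_apply_centroid_le (hKc : IsCompact K) (hK : Convex ℝ K)
    (hK0 : μ K ≠ 0) {B : ℝ} (hB : ∀ y ∈ K, f y ≤ B) {x : E} (hx : x ∈ K) :
    (finrank ℝ E + 1) * f (centroid μ K) ≤ finrank ℝ E * B + f x := by
  set n := finrank ℝ E
  obtain ⟨a, ha, hmin⟩ := hKc.exists_isMinOn ⟨x, hx⟩ f.continuous.continuousOn
  have hV : 0 < μ.real K := ENNReal.toReal_pos hK0 hKc.measure_lt_top.ne
  have hcentroid : f (centroid μ K) = f a + (μ.real K)⁻¹ * ∫ y in K, (f y - f a) ∂μ := by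
    have hid : IntegrableOn (fun y => y) K μ := continuousOn_id.integrableOn_compact hKc
    have hfa : IntegrableOn (fun _ => f a) K μ := integrableOn_const hKc.measure_lt_top.ne
    rw [centroid, map_smul, smul_eq_mul, ← f.integral_comp_comm hid,
      integral_sub (f.integrable_comp hid) hfa, setIntegral_const, smul_eq_mul]
    field_simp
    ring
  have hmean : (μ.real K)⁻¹ * ∫ y in K, (f y - f a) ∂μ ≤ n / (n + 1) * (B - f a) := by
    rw [inv_mul_le_iff₀ hV]
    linarith [setIntegral_sub_min_le μ hKc hK ha hmin (M := B - f a) fun y hy => by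
      linarith [hB y hy]]
  calc (n + 1) * f (centroid μ K)
      = (n + 1) * f a + (n + 1) * ((μ.real K)⁻¹ * ∫ y in K, (f y - f a) ∂μ) := by
        rw [hcentroid]
        ring
    _ ≤ (n + 1) * f a + (n + 1) * (n / (n + 1) * (B - f a)) := by gcongr
    _ = n * B + f a := by
        field_simp
        ring
    _ ≤ n * B + f x := by
        gcongr
        exact hmin hx

lemma centroid_mem (hKc : IsCompact K) (hK : Convex ℝ K) (hK0 : μ K ≠ 0) :
    centroid μ K ∈ K := by
  obtain ⟨x, hx⟩ := nonempty_of_measure_ne_zero hK0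
  refine hK.mem_of_forall_dual_le hKc.isClosed fun f B hB => ?_
  have := finrank_add_one_mul_apply_centroid_le μ hKc hK hK0 hB hx
  nlinarith [hB x hx]

lemma centroid_add_inv_smul_sub_mem (hKc : IsCompact K) (hK : Convex ℝ K) (hK0 : μ K ≠ 0)
    {x : E} (hx : x ∈ K) :
    centroid μ K + (finrank ℝ E : ℝ)⁻¹ • (centroid μ K - x) ∈ K := by
  refine hK.mem_of_forall_dual_le hKc.isClosed fun f B hB => ?_
  have := finrank_add_one_mul_apply_centroid_le μ hKc hK hK0 hB hx
  rw [map_add, map_smul, map_sub, smul_eq_mul]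
  rcases (finrank ℝ E).eq_zero_or_pos with hn | hn
  · simp only [hn, CharP.cast_eq_zero, inv_zero, zero_mul, add_zero] at this ⊢
    linarith [hB x hx]
  · have hn' : (0 : ℝ) < finrank ℝ E := by exact_mod_cast hn
    rw [← sub_nonneg]
    field_simp
    linarith

end Centroid

section Width

variable {d : ℕ} {S : Set (EuclideanSpace ℝ (Fin d))} {c x y : EuclideanSpace ℝ (Fin d)}

lemma bddAbove_inner_sub (hS : IsBounded S) (v : EuclideanSpace ℝ (Fin d)) :
    BddAbove {r : ℝ | ∃ x ∈ S, ∃ y ∈ S, r = ⟪v, x - y⟫} := by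
  obtain ⟨C, hC⟩ := hS.exists_norm_le
  refine ⟨‖v‖ * (C + C), ?_⟩
  rintro _ ⟨x, hx, y, hy, rfl⟩
  calc ⟪v, x - y⟫ ≤ ‖v‖ * ‖x - y‖ := real_inner_le_norm v _
    _ ≤ ‖v‖ * (C + C) := by
        gcongr
        exact (norm_sub_le x y).trans (add_le_add (hC x hx) (hC y hy))

lemma inner_sub_le_dirWidth {v : EuclideanSpace ℝ (Fin d)} (hS : IsBounded S) (hx : x ∈ S)
    (hy : y ∈ S) : ⟪v, x - y⟫ ≤ dirWidth S v :=
  le_csSup (bddAbove_inner_sub hS v) ⟨x, hx, y, hy, rfl⟩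

lemma abs_inner_sub_le_dirWidth {v : EuclideanSpace ℝ (Fin d)} (hS : IsBounded S) (hx : x ∈ S)
    (hy : y ∈ S) : |⟪v, x - y⟫| ≤ dirWidth S v := by
  refine abs_le'.2 ⟨inner_sub_le_dirWidth hS hx hy, ?_⟩
  rw [← inner_neg_right, neg_sub]
  exact inner_sub_le_dirWidth hS hy hx

lemma minWidth_le_dirWidth {v : EuclideanSpace ℝ (Fin d)} (hS : IsBounded S) (hne : S.Nonempty)
    (hv : ‖v‖ = 1) : minWidth S ≤ dirWidth S v := by
  obtain ⟨x, hx⟩ := hne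
  refine csInf_le ⟨0, ?_⟩ ⟨v, hv, rfl⟩
  rintro _ ⟨w, -, rfl⟩
  simpa using inner_sub_le_dirWidth (v := w) hS hx hx

lemma le_minWidth {r : ℝ} (hne : ∃ u : EuclideanSpace ℝ (Fin d), ‖u‖ = 1)
    (h : ∀ u : EuclideanSpace ℝ (Fin d), ‖u‖ = 1 → r ≤ dirWidth S u) : r ≤ minWidth S := by
  obtain ⟨u, hu⟩ := hne
  refine le_csInf ⟨_, u, hu, rfl⟩ ?_
  rintro _ ⟨w, hw, rfl⟩
  exact h w hw

lemma exists_mem_halfSpace_abs_inner_le {t : ℝ} (ht : 1 ≤ t)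
    (hS : ∀ x ∈ S, c + t⁻¹ • (c - x) ∈ S) (hx : x ∈ S) (u v : EuclideanSpace ℝ (Fin d)) :
    ∃ q ∈ {y | ⟪v, y - c⟫ ≤ 0} ∩ S, |⟪u, x - c⟫| ≤ t * |⟪u, q - c⟫| := by
  by_cases hxv : ⟪v, x - c⟫ ≤ 0
  · exact ⟨x, ⟨hxv, hx⟩, le_mul_of_one_le_left (abs_nonneg _) ht⟩
  have ht0 : 0 < t := zero_lt_one.trans_le ht
  have hq : ∀ w, ⟪w, c + t⁻¹ • (c - x) - c⟫ = -(t⁻¹ * ⟪w, x - c⟫) := fun w => by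
    rw [add_sub_cancel_left, real_inner_smul_right, ← neg_sub, inner_neg_right, mul_neg]
  refine ⟨_, ⟨?_, hS x hx⟩, ?_⟩
  · rw [mem_ofPred_eq, hq, neg_nonpos]
    exact mul_nonneg (inv_nonneg.2 ht0.le) (not_le.1 hxv).le
  · rw [hq, abs_neg, abs_mul, abs_of_pos (inv_pos.2 ht0), mul_inv_cancel_left₀ ht0.ne']

lemma dirWidth_le_two_mul_dirWidth_inter_halfSpace {t : ℝ} (ht : 1 ≤ t) (hSb : IsBounded S)
    (hc : c ∈ S) (hS : ∀ x ∈ S, c + t⁻¹ • (c - x) ∈ S) (u v : EuclideanSpace ℝ (Fin d)) :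
    dirWidth S u ≤ 2 * t * dirWidth ({y | ⟪v, y - c⟫ ≤ 0} ∩ S) u := by
  set L := {y | ⟪v, y - c⟫ ≤ 0} ∩ S
  have hcL : c ∈ L := ⟨by simp, hc⟩
  have hmatch : ∀ x ∈ S, |⟪u, x - c⟫| ≤ t * dirWidth L u := fun x hx => by
    obtain ⟨q, hq, hxq⟩ := exists_mem_halfSpace_abs_inner_le ht hS hx u v
    exact hxq.trans (mul_le_mul_of_nonneg_left
      (abs_inner_sub_le_dirWidth (hSb.subset inter_subset_right) hq hcL) (by linarith))
  refine csSup_le ⟨_, c, hc, c, hc, rfl⟩ ?_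
  rintro _ ⟨x, hx, y, hy, rfl⟩
  calc ⟪u, x - y⟫ = ⟪u, x - c⟫ - ⟪u, y - c⟫ := by rw [← inner_sub_right, sub_sub_sub_cancel_right]
    _ ≤ |⟪u, x - c⟫| + |⟪u, y - c⟫| := (le_abs_self _).trans (abs_sub _ _)
    _ ≤ 2 * t * dirWidth L u := by linarith [hmatch x hx, hmatch y hy]

end Width

/-- **Width after a centroid cut.** If `K ⊆ ℝ^d` is a compact convex body with nonempty
interior and centroid `μ`, and `H` is a half-space whose boundary hyperplane passes
through `μ`, then `δ(H ∩ K) ≥ δ(K)/(2d)`. -/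
theorem width_after_centroid_cut {d : ℕ} (K : Set (EuclideanSpace ℝ (Fin d)))
    (hKcomp : IsCompact K) (hKconv : Convex ℝ K) (hKint : (interior K).Nonempty)
    (μ : EuclideanSpace ℝ (Fin d))
    (hμ : μ = (volume K).toReal⁻¹ • ∫ x in K, x)
    (v : EuclideanSpace ℝ (Fin d)) (hv : v ≠ 0)
    (H : Set (EuclideanSpace ℝ (Fin d)))
    (hH : H = {x : EuclideanSpace ℝ (Fin d) | ⟪v, x - μ⟫ ≤ 0}) :
    minWidth K / (2 * d) ≤ minWidth (H ∩ K) := by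
  have hd : 0 < d := Nat.pos_of_ne_zero fun h => hv (by subst h; exact Subsingleton.elim v 0)
  have hK0 : volume K ≠ 0 := (Measure.measure_pos_of_nonempty_interior _ hKint).ne'
  have hμ' : μ = centroid volume K := hμ
  have hμK : μ ∈ K := hμ' ▸ centroid_mem volume hKcomp hKconv hK0
  have hreflect : ∀ x ∈ K, μ + (d : ℝ)⁻¹ • (μ - x) ∈ K := fun x hx => by
    simpa only [hμ', finrank_euclideanSpace_fin] using
      centroid_add_inv_smul_sub_mem volume hKcomp hKconv hK0 hx
  have hcut := dirWidth_le_two_mul_dirWidth_inter_halfSpace (by exact_mod_cast hd)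
    hKcomp.isBounded hμK hreflect
  refine hH ▸ le_minWidth ⟨_, norm_smul_inv_norm (𝕜 := ℝ) hv⟩ fun u hu => ?_
  rw [div_le_iff₀ (by positivity)]
  calc minWidth K ≤ dirWidth K u := minWidth_le_dirWidth hKcomp.isBounded ⟨μ, hμK⟩ hu
    _ ≤ _ := by linarith [hcut u v]
end

section
/- Norm sandwich via John's theorem: For any norm ‖·‖ on ℝ^d (d ≥ 1), there exists an invertible linear map T : ℝ^d → ℝ^d such that for all x ∈ ℝ^d, ‖x‖₂ ≤ ‖T x‖ ≤ √d · ‖x‖₂, where ‖·‖₂ is the Euclidean norm. -/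
/-!
John's argument. Among the linear maps `A` with `p (A x) ≤ ‖x‖`, i.e. the ellipsoids `A(B)`
(`B` the Euclidean unit ball) inscribed in the unit ball `K` of `p`, compactness gives one of
maximal `|det A|`. If some `v` with `p (A v) ≤ 1` had `‖v‖ > √d`, then `K` would contain `A` of
the convex hull of `B ∪ {±v}`, and this hull contains the ellipsoid with semi-axis `α` along `v`
and `β` orthogonal to it for suitable `α, β` with `α β ^ (d - 1) > 1` (possible precisely because
`‖v‖ ^ 2 > d`). Composing `A` with that stretch contradicts maximality, so
`A(B) ⊆ K ⊆ √d • A(B)`.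
-/

open Module Metric Real RealInnerProductSpace

theorem exists_stretch_params (n : ℕ) {r : ℝ} (hr : (n + 1 : ℝ) < r ^ 2) :
    ∃ α β : ℝ, 1 ≤ α ∧ α ^ 2 < r ^ 2 ∧ β ^ 2 * (r ^ 2 - 1) = r ^ 2 - α ^ 2 ∧
      1 < α * β ^ n := by
  set s := r ^ 2 - 1
  have hs : (n : ℝ) < s := by linarith
  have hs0 : 0 < s := by linarith [n.cast_nonneg (α := ℝ)]
  set ε := (s - n) / (2 * (n + 1))
  have hε : 0 < ε := by positivity
  have hεs : ε * (2 * (n + 1)) = s - n := div_mul_cancel₀ _ (by positivity)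
  have hεs' : ε < s := by nlinarith
  have hβ : 0 < 1 - ε / s := by rw [sub_pos, div_lt_one hs0]; exact hεs'
  refine ⟨√(1 + ε), √(1 - ε / s), one_le_sqrt.2 (by linarith), ?_, ?_, ?_⟩
  · rw [sq_sqrt (by linarith)]; simp only [s] at hεs'; linarith
  · rw [sq_sqrt hβ.le, sq_sqrt (by linarith)]; field_simp; ring
  · -- Bernoulli: `(1 - ε/s)^n ≥ 1 - nε/s`, and `(1 + ε)(1 - nε/s) > 1` as `nε < s - n`.
    have hbern : 1 + n * (-(ε / s)) ≤ (1 - ε / s) ^ n := by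
      simpa [sub_eq_add_neg] using
        one_add_mul_le_pow (a := -(ε / s)) (by linarith [(div_lt_one hs0).2 hεs']) n
    have hgain : 1 < (1 + ε) * (1 + n * (-(ε / s))) := by
      have : (1 + ε) * (1 + n * (-(ε / s))) - 1 = ε / s * (s - n - n * ε) := by
        field_simp; ring
      have : 0 < s - n - n * ε := by nlinarith
      nlinarith [div_pos hε hs0]
    have hsq : 1 < (√(1 + ε) * √(1 - ε / s) ^ n) ^ 2 := by
      rw [mul_pow, ← pow_mul, mul_comm n 2, pow_mul, sq_sqrt (by linarith), sq_sqrt hβ.le]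
      nlinarith
    exact (one_lt_sq_iff₀ (by positivity)).1 hsq

/-- The point `(α t, β s)` of the stretched disc is `l • (r, 0) + (1 - l) • q` with `‖q‖ ≤ 1`. -/
theorem exists_convex_weight {r α β t s : ℝ} (hr : 1 < r) (hα : 1 ≤ α) (hαr : α ^ 2 < r ^ 2)
    (hβr : β ^ 2 * (r ^ 2 - 1) = r ^ 2 - α ^ 2) (ht : 0 ≤ t) (hts : t ^ 2 + s ^ 2 ≤ 1) :
    ∃ l : ℝ, 0 ≤ l ∧ l < 1 ∧ (α * t - l * r) ^ 2 + (β * s) ^ 2 ≤ (1 - l) ^ 2 := by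
  have hr1 : 0 < r ^ 2 - 1 := by nlinarith
  have hs : β ^ 2 * s ^ 2 * (r ^ 2 - 1) ≤ (r ^ 2 - α ^ 2) * (1 - t ^ 2) := by
    rw [mul_right_comm, hβr]; exact mul_le_mul_of_nonneg_left (by linarith) (by linarith)
  have htα : α * t < r := by nlinarith
  rcases le_or_gt (r * (α * t)) 1 with hrt | hrt
  · refine ⟨0, le_rfl, one_pos, ?_⟩
    have : r ^ 2 * t ^ 2 ≤ 1 := by nlinarith [mul_nonneg (by linarith : 0 ≤ r) ht]
    nlinarith [mul_nonneg (by nlinarith : 0 ≤ α ^ 2 - 1) (by nlinarith : 0 ≤ 1 - r ^ 2 * t ^ 2)]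
  · refine ⟨(r * (α * t) - 1) / (r ^ 2 - 1), by positivity, by rw [div_lt_one hr1]; nlinarith, ?_⟩
    have key : (1 - (r * (α * t) - 1) / (r ^ 2 - 1)) ^ 2
        - (α * t - (r * (α * t) - 1) / (r ^ 2 - 1) * r) ^ 2 = (r - α * t) ^ 2 / (r ^ 2 - 1) := by
      field_simp; ring
    have : (β * s) ^ 2 ≤ (r - α * t) ^ 2 / (r ^ 2 - 1) := by
      rw [le_div_iff₀ hr1]; nlinarith [sq_nonneg (α - r * t)]
    linarith

theorem mem_convexHull_insert_closedBall_of_norm_sub_smul_le {F : Type*}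
    [SeminormedAddCommGroup F] [NormedSpace ℝ F] {q y : F} {l : ℝ} (hl0 : 0 ≤ l) (hl1 : l < 1)
    (h : ‖y - l • q‖ ≤ 1 - l) : y ∈ convexHull ℝ (insert q (closedBall 0 1)) := by
  have hl : 0 < 1 - l := sub_pos.2 hl1
  have hp : (1 - l)⁻¹ • (y - l • q) ∈ closedBall (0 : F) 1 := by
    rw [mem_closedBall_zero_iff, norm_smul, Real.norm_of_nonneg (inv_pos.2 hl).le,
      inv_mul_le_one₀ hl]
    exact h
  have hy : y = l • q + (1 - l) • (1 - l)⁻¹ • (y - l • q) := by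
    rw [smul_inv_smul₀ hl.ne']; abel
  rw [hy]
  exact convex_convexHull ℝ _ (subset_convexHull ℝ _ (Set.mem_insert _ _))
    (subset_convexHull ℝ _ (Set.mem_insert_of_mem _ hp)) hl0 hl.le (by ring)

section Stretch

variable {E : Type*} [NormedAddCommGroup E] [InnerProductSpace ℝ E]

noncomputable def stretch (u : E) (α β : ℝ) : E →L[ℝ] E :=
  β • ContinuousLinearMap.id ℝ E + (α - β) • (innerSL ℝ u).smulRight u

theorem stretch_apply (u : E) (α β : ℝ) (x : E) :
    stretch u α β x = β • x + ((α - β) * ⟪u, x⟫) • u := by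
  simp [stretch, mul_smul]

@[simp]
theorem stretch_neg (u : E) (α β : ℝ) : stretch (-u) α β = stretch u α β := by
  ext x; simp [stretch_apply, inner_neg_left]

theorem stretch_smul_add {u w : E} (hu : ‖u‖ = 1) (huw : ⟪u, w⟫ = 0) (α β t : ℝ) :
    stretch u α β (t • u + w) = (α * t) • u + β • w := by
  simp only [stretch_apply, inner_add_right, real_inner_smul_right, real_inner_self_eq_norm_sq,
    hu, huw]
  module

theorem det_stretch [FiniteDimensional ℝ E] {n : ℕ} (hn : finrank ℝ E = n + 1) {u : E}
    (hu : ‖u‖ = 1) (α β : ℝ) : (stretch u α β).det = α * β ^ n := by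
  obtain ⟨b, hb⟩ := Orthonormal.exists_orthonormalBasis_extension_of_card_eq (ι := Fin (n + 1))
    (by simpa using hn) (v := fun _ ↦ u) (s := {0}) (by simp [hu])
  have hb0 : b 0 = u := hb 0 rfl
  have hmat : LinearMap.toMatrix b.toBasis b.toBasis (stretch u α β)
      = Matrix.diagonal (Fin.cons α fun _ ↦ β) := by
    ext i j
    rw [LinearMap.toMatrix_apply, OrthonormalBasis.coe_toBasis,
      OrthonormalBasis.coe_toBasis_repr_apply, b.repr_apply_apply, ContinuousLinearMap.coe_coe,
      stretch_apply, ← hb0]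
    simp only [inner_add_right, inner_smul_right, b.inner_eq_ite, Matrix.diagonal_apply]
    cases i using Fin.cases <;> cases j using Fin.cases <;>
      simp [Fin.succ_ne_zero, eq_comm (a := (0 : Fin (n + 1)))]
  rw [ContinuousLinearMap.det, ← LinearMap.det_toMatrix b.toBasis, hmat, Matrix.det_diagonal,
    Fin.prod_univ_succ]
  simp

variable {u x : E} {r α β : ℝ}

theorem stretch_mem_convexHull_of_inner_nonneg (hu : ‖u‖ = 1) (hr : 1 < r) (hα : 1 ≤ α)
    (hαr : α ^ 2 < r ^ 2) (hβr : β ^ 2 * (r ^ 2 - 1) = r ^ 2 - α ^ 2) (hx : ‖x‖ ≤ 1)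
    (hux : 0 ≤ ⟪u, x⟫) : stretch u α β x ∈ convexHull ℝ (insert (r • u) (closedBall 0 1)) := by
  set t := ⟪u, x⟫
  set w := x - t • u
  have huw : ⟪u, w⟫ = 0 := by simp [w, t, inner_sub_right, real_inner_smul_right, hu]
  have hnorm (a b : ℝ) : ‖a • u + b • w‖ ^ 2 = a ^ 2 + (b * ‖w‖) ^ 2 := by
    rw [norm_add_sq_real, real_inner_smul_left, real_inner_smul_right, huw, norm_smul, norm_smul,
      hu, Real.norm_eq_abs, Real.norm_eq_abs]
    simp [mul_pow]
  have hxw : x = t • u + w := by simp [w]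
  have htw : t ^ 2 + ‖w‖ ^ 2 ≤ 1 := by
    have := hnorm t 1
    rw [one_smul, ← hxw, one_mul] at this
    nlinarith [norm_nonneg x]
  obtain ⟨l, hl0, hl1, hl⟩ := exists_convex_weight hr hα hαr hβr hux htw
  refine mem_convexHull_insert_closedBall_of_norm_sub_smul_le hl0 hl1 ?_
  have hstretch : stretch u α β x - l • r • u = (α * t - l * r) • u + β • w := by
    rw [hxw, stretch_smul_add hu huw]; module
  rw [← pow_le_pow_iff_left₀ (norm_nonneg _) (by linarith) two_ne_zero, hstretch, hnorm]
  exact hl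

theorem stretch_mem_convexHull (hu : ‖u‖ = 1) (hr : 1 < r) (hα : 1 ≤ α) (hαr : α ^ 2 < r ^ 2)
    (hβr : β ^ 2 * (r ^ 2 - 1) = r ^ 2 - α ^ 2) (hx : ‖x‖ ≤ 1) :
    stretch u α β x ∈ convexHull ℝ (insert (r • u) (insert (-(r • u)) (closedBall 0 1))) := by
  rcases le_total 0 ⟪u, x⟫ with hux | hux
  · refine convexHull_mono (Set.insert_subset_insert (Set.subset_insert _ _)) ?_
    exact stretch_mem_convexHull_of_inner_nonneg hu hr hα hαr hβr hx hux
  · refine convexHull_mono (Set.subset_insert _ _) ?_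
    simpa using stretch_mem_convexHull_of_inner_nonneg (u := -u) (by simpa) hr hα hαr hβr hx
      (by simpa [inner_neg_left] using hux)

end Stretch

namespace Seminorm

variable {E : Type*}

theorem le_mul_of_forall_le_one [AddCommGroup E] [Module ℝ E] {p q : Seminorm ℝ E} {c : ℝ}
    (h : ∀ x, p x ≤ 1 → q x ≤ c) (x : E) : q x ≤ c * p x := by
  rcases (apply_nonneg p x).eq_or_lt with hpx | hpx
  · -- `q` is bounded by `c` on the whole line through `x`, so it vanishes at `x`.
    suffices q x ≤ 0 by rwa [← hpx, mul_zero]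
    by_contra! hq
    obtain ⟨k, hk⟩ := exists_nat_gt (c / q x)
    have hkx := h ((k : ℝ) • x) (by rw [map_smul_eq_mul, ← hpx, mul_zero]; exact zero_le_one)
    rw [map_smul_eq_mul, Real.norm_natCast] at hkx
    rw [div_lt_iff₀ hq] at hk
    linarith
  · have hx := h ((p x)⁻¹ • x) (by
      rw [map_smul_eq_mul, norm_inv, Real.norm_of_nonneg hpx.le, inv_mul_cancel₀ hpx.ne'])
    rwa [map_smul_eq_mul, norm_inv, Real.norm_of_nonneg hpx.le, inv_mul_le_iff₀ hpx,
      mul_comm] at hx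

/-- `A ∈ p.inscribedMaps` iff the ellipsoid `A '' closedBall 0 1` lies in the unit ball of `p`. -/
def inscribedMaps [SeminormedAddCommGroup E] [Module ℝ E] (p : Seminorm ℝ E) : Set (E →L[ℝ] E) :=
  {A | ∀ x, p (A x) ≤ ‖x‖}

section NormedSpace

variable [NormedAddCommGroup E] [NormedSpace ℝ E] [FiniteDimensional ℝ E] (p : Seminorm ℝ E)

theorem continuous_of_finiteDimensional : Continuous p :=
  continuousOn_univ.1 (p.convexOn.continuousOn isOpen_univ)

theorem exists_pos_mul_norm_le (hp : ∀ x, p x = 0 → x = 0) : ∃ c > 0, ∀ x, c * ‖x‖ ≤ p x := by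
  rcases subsingleton_or_nontrivial E with _ | _
  · exact ⟨1, one_pos, fun x ↦ by simp [Subsingleton.elim x 0]⟩
  obtain ⟨x₀, hx₀, hmin⟩ := (isCompact_sphere (0 : E) 1).exists_isMinOn
    (NormedSpace.sphere_nonempty.2 zero_le_one) p.continuous_of_finiteDimensional.continuousOn
  have hx₀0 : x₀ ≠ 0 := ne_zero_of_mem_unit_sphere ⟨x₀, hx₀⟩
  refine ⟨p x₀, (apply_nonneg p x₀).lt_of_ne' (mt (hp x₀) hx₀0), fun x ↦ ?_⟩
  rcases eq_or_ne x 0 with rfl | hx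
  · simp
  have hxn : 0 < ‖x‖ := norm_pos_iff.2 hx
  have : p x₀ ≤ p (‖x‖⁻¹ • x) := hmin (show ‖x‖⁻¹ • x ∈ sphere (0 : E) 1 by
    rw [mem_sphere_zero_iff_norm, norm_smul, norm_inv, norm_norm, inv_mul_cancel₀ hxn.ne'])
  rwa [map_smul_eq_mul, norm_inv, norm_norm, le_inv_mul_iff₀ hxn, mul_comm] at this

theorem isCompact_inscribedMaps (hp : ∀ x, p x = 0 → x = 0) : IsCompact p.inscribedMaps := by
  obtain ⟨c, hc, hcp⟩ := p.exists_pos_mul_norm_le hp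
  refine Metric.isCompact_of_isClosed_isBounded ?_ ?_
  · rw [inscribedMaps, Set.ofPred_forall]
    exact isClosed_iInter fun x ↦ isClosed_le
      (p.continuous_of_finiteDimensional.comp (continuous_eval_const x)) continuous_const
  · refine (isBounded_closedBall (x := 0) (r := c⁻¹)).subset fun A hA ↦ ?_
    rw [mem_closedBall_zero_iff]
    refine A.opNorm_le_bound (by positivity) fun x ↦ ?_
    rw [inv_mul_eq_div, le_div_iff₀ hc, mul_comm]
    exact (hcp _).trans (hA x)

theorem exists_isMaxOn_abs_det (hp : ∀ x, p x = 0 → x = 0) :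
    ∃ A ∈ p.inscribedMaps, IsMaxOn (fun B ↦ |B.det|) p.inscribedMaps A ∧ A.det ≠ 0 := by
  obtain ⟨C, hC, hpC⟩ := p.bound_of_continuous_normedSpace p.continuous_of_finiteDimensional
  have hid : C⁻¹ • ContinuousLinearMap.id ℝ E ∈ p.inscribedMaps := fun x ↦ by
    rw [smul_apply, ContinuousLinearMap.id_apply, map_smul_eq_mul, norm_inv,
      Real.norm_of_nonneg hC.le, inv_mul_le_iff₀ hC]
    exact hpC x
  obtain ⟨A, hA, hmax⟩ := (p.isCompact_inscribedMaps hp).exists_isMaxOn ⟨_, hid⟩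
    ContinuousLinearMap.continuous_det.abs.continuousOn
  refine ⟨A, hA, hmax, fun hdet ↦ ?_⟩
  have := hmax hid
  simp [hdet, ContinuousLinearMap.det, LinearMap.det_smul, hC.ne'] at this

end NormedSpace

section InnerProductSpace

variable [NormedAddCommGroup E] [InnerProductSpace ℝ E] [FiniteDimensional ℝ E] {p : Seminorm ℝ E}
  {A : E →L[ℝ] E}

theorem exists_mem_inscribedMaps_abs_det_lt (hA : A ∈ p.inscribedMaps) (hdet : A.det ≠ 0)
    {n : ℕ} (hn : finrank ℝ E = n + 1) {v : E} (hv : (n + 1 : ℝ) < ‖v‖ ^ 2) (hAv : p (A v) ≤ 1) :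
    ∃ B ∈ p.inscribedMaps, |A.det| < |B.det| := by
  set r := ‖v‖
  have hr : 1 < r := by nlinarith [norm_nonneg v]
  set u := r⁻¹ • v
  have hu : ‖u‖ = 1 := by
    rw [norm_smul, norm_inv, norm_norm, inv_mul_cancel₀ (by positivity)]
  have hru : r • u = v := smul_inv_smul₀ (by positivity) v
  obtain ⟨α, β, hα, hαr, hβr, hgain⟩ := exists_stretch_params n hv
  refine ⟨A.comp (stretch u α β), ?_, ?_⟩
  · have hK : convexHull ℝ (insert (r • u) (insert (-(r • u)) (Metric.closedBall 0 1))) ⊆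
        (p.comp (A : E →ₗ[ℝ] E)).closedBall 0 1 := by
      refine convexHull_min ?_ (convex_closedBall _ _ _)
      simp only [Set.insert_subset_iff, hru, mem_closedBall_zero, comp_apply, map_neg_eq_map,
        ContinuousLinearMap.coe_coe, hAv, true_and]
      exact fun y hy ↦ (mem_closedBall_zero _).2 ((hA y).trans (mem_closedBall_zero_iff.1 hy))
    intro x
    simpa using le_mul_of_forall_le_one (p := normSeminorm ℝ E)
      (q := p.comp (A.comp (stretch u α β) : E →ₗ[ℝ] E)) (c := 1) (fun y hy ↦ by
        simpa using hK (stretch_mem_convexHull hu hr hα hαr hβr (by simpa using hy))) x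
  · have hdet_stretch : 0 < α * β ^ n := one_pos.trans hgain
    have hcomp : (A.comp (stretch u α β)).det = A.det * (stretch u α β).det :=
      LinearMap.det_comp _ _
    rw [hcomp, det_stretch hn hu, abs_mul, abs_of_pos hdet_stretch]
    exact lt_mul_of_one_lt_right (abs_pos.2 hdet) hgain

theorem norm_le_sqrt_finrank_of_isMaxOn (hA : A ∈ p.inscribedMaps)
    (hmax : IsMaxOn (fun B ↦ |B.det|) p.inscribedMaps A) (hdet : A.det ≠ 0) {v : E}
    (hAv : p (A v) ≤ 1) : ‖v‖ ≤ √(finrank ℝ E) := by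
  by_contra! hv
  have : Nontrivial E := nontrivial_of_ne v 0 (norm_pos_iff.1 ((sqrt_nonneg _).trans_lt hv))
  obtain ⟨n, hn⟩ := Nat.exists_eq_succ_of_ne_zero (finrank_pos (R := ℝ) (M := E)).ne'
  have hv' : (n + 1 : ℝ) < ‖v‖ ^ 2 := by
    rwa [sqrt_lt' ((sqrt_nonneg _).trans_lt hv), hn, Nat.cast_succ] at hv
  obtain ⟨B, hB, hlt⟩ := exists_mem_inscribedMaps_abs_det_lt hA hdet hn hv' hAv
  exact (hmax hB).not_gt hlt

theorem exists_linearEquiv_apply_le_norm_and_norm_le_sqrt_finrank_mul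
    (hp : ∀ x, p x = 0 → x = 0) :
    ∃ T : E ≃ₗ[ℝ] E, ∀ x, p (T x) ≤ ‖x‖ ∧ ‖x‖ ≤ √(finrank ℝ E) * p (T x) := by
  obtain ⟨A, hA, hmax, hdet⟩ := p.exists_isMaxOn_abs_det hp
  refine ⟨LinearMap.equivOfDetNeZero A hdet, fun x ↦ ⟨hA x, ?_⟩⟩
  exact le_mul_of_forall_le_one (p := p.comp (A : E →ₗ[ℝ] E)) (q := normSeminorm ℝ E)
    (fun v hv ↦ norm_le_sqrt_finrank_of_isMaxOn hA hmax hdet hv) x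

end InnerProductSpace

end Seminorm

/-- **Norm sandwich via John's theorem.** For any norm `N` on `ℝ^d` (`d ≥ 1`), there is an
invertible linear map `T : ℝ^d → ℝ^d` such that `‖x‖₂ ≤ N(T x) ≤ √d · ‖x‖₂` for all `x`,
where `‖·‖₂` is the Euclidean norm. -/
theorem norm_sandwich_john {d : ℕ} (hd : 1 ≤ d)
    (N : EuclideanSpace ℝ (Fin d) → ℝ)
    (Nadd : ∀ x y, N (x + y) ≤ N x + N y)
    (Nsmul : ∀ (c : ℝ) (x), N (c • x) = |c| * N x)
    (Ndef : ∀ x, N x = 0 → x = 0) :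
    ∃ T : EuclideanSpace ℝ (Fin d) ≃ₗ[ℝ] EuclideanSpace ℝ (Fin d),
      ∀ x : EuclideanSpace ℝ (Fin d), ‖x‖ ≤ N (T x) ∧ N (T x) ≤ Real.sqrt d * ‖x‖ := by
  let p : Seminorm ℝ (EuclideanSpace ℝ (Fin d)) :=
    Seminorm.of N Nadd fun c x ↦ by rw [Nsmul, Real.norm_eq_abs]
  obtain ⟨A, hA⟩ := p.exists_linearEquiv_apply_le_norm_and_norm_le_sqrt_finrank_mul Ndef
  rw [finrank_euclideanSpace_fin] at hA
  have hd' : 0 < √(d : ℝ) := sqrt_pos.2 (by exact_mod_cast hd)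
  refine ⟨A.trans (LinearEquiv.smulOfNeZero ℝ _ _ hd'.ne'), fun x ↦ ?_⟩
  have hT : N ((A.trans (LinearEquiv.smulOfNeZero ℝ _ _ hd'.ne')) x) = √d * N (A x) := by
    rw [LinearEquiv.trans_apply, LinearEquiv.smulOfNeZero_apply, Nsmul, abs_of_pos hd']
  obtain ⟨hle, hge⟩ := hA x
  exact ⟨hT ▸ hge, hT ▸ mul_le_mul_of_nonneg_left hle hd'.le⟩
end
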